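/- arXiv:1412.7589 — 3 statements merged into one kernel-verified Lean document; each statement's English description precedes it below -/
import Mathlib

section
/- Let ABC be a projective triangle in general position with respect to a conic Φ, with chosen noncollinear midpoints D ∈ BC, E ∈ CA, F ∈ AB. Then the medians AD, BE, CF are concurrent. -/
open Matrix

/-- Points (and, dually, lines) of the real projective plane are represented by
nonzero vectors of `ℝ³`; `dot3` is the incidence pairing. -/
def dot3 (u v : Fin 3 → ℝ) : ℝ := u 0 * v 0 + u 1 * v 1 + u 2 * v 2

/-- The (projective points represented by) three vectors are collinear: some nonzero
line form vanishes on all of them. -/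
def Coll (a b c : Fin 3 → ℝ) : Prop :=
  ∃ l : Fin 3 → ℝ, l ≠ 0 ∧ dot3 l a = 0 ∧ dot3 l b = 0 ∧ dot3 l c = 0

/-- `CRv a b c d k`: the cross ratio `(abcd)` of four collinear projective points
(represented by the given vectors) equals `k`.  Writing `c = x•a + y•b` and
`d = z•a + w•b`, the cross ratio is `(y/x)/(w/z) = (y*z)/(x*w)`; this value is
independent of the chosen representative vectors. -/
def CRv (a b c d : Fin 3 → ℝ) (k : ℝ) : Prop :=
  ∃ x y z w : ℝ, c = x • a + y • b ∧ d = z • a + w • b ∧ x * w ≠ 0 ∧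
    k = (y * z) / (x * w)

/-- `Midpoints M X Y D D'`: with respect to the conic with (symmetric, nondegenerate)
matrix `M`, the pair `{D, D'}` is the pair of midpoints of the segment `XY`:
both lie on the line `XY`, they are conjugate to each other with respect to the conic,
and they are harmonic conjugates with respect to `X, Y`.  (Equivalently, they are
harmonically conjugate both with respect to `{X,Y}` and with respect to the
intersection pair of the line `XY` with the conic.) -/
def Midpoints (M : Matrix (Fin 3) (Fin 3) ℝ) (X Y D D' : Fin 3 → ℝ) : Prop :=
  Coll X Y D ∧ Coll X Y D' ∧ dot3 D (M.mulVec D') = 0 ∧ CRv X Y D D' (-1)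

lemma bil_expand (M : Matrix (Fin 3) (Fin 3) ℝ) (B C : Fin 3 → ℝ) (x y z w : ℝ) :
    dot3 (x • B + y • C) (M.mulVec (z • B + w • C)) =
      x*z * dot3 B (M.mulVec B) + x*w * dot3 B (M.mulVec C)
      + y*z * dot3 C (M.mulVec B) + y*w * dot3 C (M.mulVec C) := by
  simp [dot3, Matrix.mulVec, dotProduct, Fin.sum_univ_three]
  ring

lemma bil_symm (M : Matrix (Fin 3) (Fin 3) ℝ) (hsymm : M.IsSymm) (u v : Fin 3 → ℝ) :
    dot3 u (M.mulVec v) = dot3 v (M.mulVec u) := by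
  simp only [dot3, Matrix.mulVec, dotProduct, Fin.sum_univ_three]
  rw [show M 1 0 = M 0 1 from hsymm.apply 0 1, show M 2 0 = M 0 2 from hsymm.apply 0 2,
    show M 2 1 = M 1 2 from hsymm.apply 1 2]
  ring

lemma dot3_comb (l u v : Fin 3 → ℝ) (x y : ℝ) :
    dot3 l (x • u + y • v) = x * dot3 l u + y * dot3 l v := by
  simp [dot3]; ring

lemma dot3_comb3 (l u v w : Fin 3 → ℝ) (x y z : ℝ) :
    dot3 l (x • u + y • v + z • w) = x * dot3 l u + y * dot3 l v + z * dot3 l w := by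
  simp [dot3]; ring

/-- From the midpoint data extract coordinates of `D` on `XY` and the key relation. -/
lemma mid_rel (M : Matrix (Fin 3) (Fin 3) ℝ) (hsymm : M.IsSymm) (X Y D : Fin 3 → ℝ)
    (h : ∃ D', Midpoints M X Y D D') :
    ∃ x y : ℝ, D = x • X + y • Y ∧ x ≠ 0 ∧ y ≠ 0 ∧
      x^2 * dot3 X (M.mulVec X) = y^2 * dot3 Y (M.mulVec Y) := by
  obtain ⟨D', _, _, hconj, x, y, z, w, hDxy, hD', hxw, hk⟩ := h
  have hx : x ≠ 0 := fun h => hxw (by simp [h])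
  have hw : w ≠ 0 := fun h => hxw (by simp [h])
  have hyz : y * z = -(x * w) := by field_simp at hk; linarith
  have hy : y ≠ 0 := by
    intro h0
    rw [h0, zero_mul] at hyz
    exact hxw (by linarith)
  rw [hDxy, hD', bil_expand, bil_symm M hsymm Y X] at hconj
  have h0 : x*z*dot3 X (M.mulVec X) + y*w*dot3 Y (M.mulVec Y) = 0 := by
    linear_combination hconj - (dot3 X (M.mulVec Y)) * hyz
  refine ⟨x, y, hDxy, hx, hy, ?_⟩
  have hkey : w * (y^2 * dot3 Y (M.mulVec Y) - x^2 * dot3 X (M.mulVec X)) = 0 := by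
    linear_combination y * h0 - x * dot3 X (M.mulVec X) * hyz
  have := (mul_eq_zero.mp hkey).resolve_left hw
  linarith

lemma coll_of_det_eq_zero (a b c : Fin 3 → ℝ) (h : (Matrix.of ![a, b, c]).det = 0) :
    Coll a b c := by
  obtain ⟨l, hl, hml⟩ := (Matrix.exists_mulVec_eq_zero_iff).mpr h
  have h0 := congrFun hml 0
  have h1 := congrFun hml 1
  have h2 := congrFun hml 2
  simp [Matrix.mulVec, dotProduct, Fin.sum_univ_three] at h0 h1 h2
  exact ⟨l, hl, by simp [dot3]; linarith, by simp [dot3]; linarith, by simp [dot3]; linarith⟩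

lemma line3 (A B C : Fin 3 → ℝ) (hdet : (Matrix.of ![A, B, C]).det ≠ 0) (t0 t1 t2 : ℝ)
    (ht : ¬ (t0 = 0 ∧ t1 = 0 ∧ t2 = 0)) :
    ∃ l : Fin 3 → ℝ, l ≠ 0 ∧ dot3 l A = t0 ∧ dot3 l B = t1 ∧ dot3 l C = t2 := by
  obtain ⟨l, hml⟩ : ∃ l, (Matrix.of ![A, B, C]).mulVec l = ![t0, t1, t2] :=
    ⟨(Matrix.of ![A, B, C])⁻¹.mulVec ![t0, t1, t2], by
      rw [Matrix.mulVec_mulVec, Matrix.mul_nonsing_inv _ (isUnit_iff_ne_zero.mpr hdet),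
        Matrix.one_mulVec]⟩
  have h0 := congrFun hml 0
  have h1 := congrFun hml 1
  have h2 := congrFun hml 2
  simp [Matrix.mulVec, dotProduct, Fin.sum_univ_three] at h0 h1 h2
  refine ⟨l, ?_, by simp only [dot3]; linear_combination h0,
    by simp only [dot3]; linear_combination h1, by simp only [dot3]; linear_combination h2⟩
  intro hl0
  rw [hl0] at h0 h1 h2
  simp at h0 h1 h2
  exact ht ⟨by linarith, by linarith, by linarith⟩

/-- Concurrence of the medians: for a triangle `ABC` in general position with respect to
a nondegenerate conic, with noncollinear chosen midpoints `D ∈ BC`, `E ∈ CA`, `F ∈ AB`,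
the medians `AD`, `BE`, `CF` are concurrent. -/
theorem medians_concurrent (M : Matrix (Fin 3) (Fin 3) ℝ)
    (hsymm : M.IsSymm) (hdet : M.det ≠ 0)
    (A B C A' B' C' D E F : Fin 3 → ℝ)
    (hABC : ¬Coll A B C)
    (hAc : dot3 A (M.mulVec A) ≠ 0) (hBc : dot3 B (M.mulVec B) ≠ 0)
    (hCc : dot3 C (M.mulVec C) ≠ 0)
    (hA' : A' ≠ 0) (hA'B : dot3 B (M.mulVec A') = 0) (hA'C : dot3 C (M.mulVec A') = 0)
    (hB' : B' ≠ 0) (hB'C : dot3 C (M.mulVec B') = 0) (hB'A : dot3 A (M.mulVec B') = 0)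
    (hC' : C' ≠ 0) (hC'A : dot3 A (M.mulVec C') = 0) (hC'B : dot3 B (M.mulVec C') = 0)
    (hA'c : dot3 A' (M.mulVec A') ≠ 0) (hB'c : dot3 B' (M.mulVec B') ≠ 0)
    (hC'c : dot3 C' (M.mulVec C') ≠ 0)
    (htana : ¬Coll B C A') (htanb : ¬Coll C A B') (htanc : ¬Coll A B C')
    (hD : ∃ Da, Midpoints M B C D Da) (hE : ∃ Eb, Midpoints M C A E Eb)
    (hF : ∃ Fc, Midpoints M A B F Fc)
    (hDEF : ¬Coll D E F) :
    ∃ G : Fin 3 → ℝ, G ≠ 0 ∧ Coll A D G ∧ Coll B E G ∧ Coll C F G := by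
  obtain ⟨x, y, hDeq, hx, hy, h1⟩ := mid_rel M hsymm B C D hD
  obtain ⟨p, q, hEeq, hp, hq, h2⟩ := mid_rel M hsymm C A E hE
  obtain ⟨r, s, hFeq, hr, hs, h3⟩ := mid_rel M hsymm A B F hF
  set a := dot3 A (M.mulVec A) with ha
  set b := dot3 B (M.mulVec B) with hb
  set c := dot3 C (M.mulVec C) with hc
  have habc : a * b * c ≠ 0 := mul_ne_zero (mul_ne_zero hAc hBc) hCc
  have hdetN : (Matrix.of ![A, B, C]).det ≠ 0 := fun h => hABC (coll_of_det_eq_zero A B C h)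
  have keyeq : (x*p*r - y*q*s) * (x*p*r + y*q*s) * (a * b * c) = 0 := by
    linear_combination (p^2*r^2*a*c) * h1 + (y^2*r^2*a*c) * h2 + (y^2*q^2*a*c) * h3
  have hST : (x*p*r - y*q*s) * (x*p*r + y*q*s) = 0 :=
    (mul_eq_zero.mp keyeq).resolve_right habc
  rcases mul_eq_zero.mp hST with hS | hT
  · -- main case : x*p*r = y*q*s
    have hxpr : x*p*r = y*q*s := by linarith
    refine ⟨(q*y) • A + (p*x) • B + (p*y) • C, ?_, ?_, ?_, ?_⟩
    · -- nonzero
      intro hG0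
      apply hABC
      apply coll_of_det_eq_zero
      apply (Matrix.exists_vecMul_eq_zero_iff).mp
      refine ⟨![q*y, p*x, p*y], ?_, ?_⟩
      · intro hv
        have h2' := congrFun hv 2
        simp at h2'
        rcases h2' with h' | h'
        · exact hp h'
        · exact hy h'
      · funext j
        have := congrFun hG0 j
        simp [Matrix.vecMul, dotProduct, Fin.sum_univ_three] at this ⊢
        linear_combination this
    · -- Coll A D G
      obtain ⟨l, hl, hlA, hlB, hlC⟩ := line3 A B C hdetN 0 y (-x)
        (fun h => hy h.2.1)
      refine ⟨l, hl, hlA, ?_, ?_⟩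
      · rw [hDeq, dot3_comb, hlB, hlC]; ring
      · rw [dot3_comb3, hlA, hlB, hlC]; ring
    · -- Coll B E G
      obtain ⟨l, hl, hlA, hlB, hlC⟩ := line3 A B C hdetN p 0 (-q)
        (fun h => hp h.1)
      refine ⟨l, hl, hlB, ?_, ?_⟩
      · rw [hEeq, dot3_comb, hlA, hlC]; ring
      · rw [dot3_comb3, hlA, hlB, hlC]; ring
    · -- Coll C F G
      obtain ⟨l, hl, hlA, hlB, hlC⟩ := line3 A B C hdetN s (-r) 0
        (fun h => hs h.1)
      refine ⟨l, hl, hlC, ?_, ?_⟩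
      · rw [hFeq, dot3_comb, hlA, hlB]; ring
      · rw [dot3_comb3, hlA, hlB, hlC]
        linear_combination -hxpr
  · -- degenerate case : x*p*r + y*q*s = 0 contradicts hDEF
    exfalso
    apply hDEF
    obtain ⟨l, hl, hlA, hlB, hlC⟩ := line3 A B C hdetN (-(p*x)) (-(y*q)) (q*x)
      (fun h => (mul_ne_zero hq hx) h.2.2)
    refine ⟨l, hl, ?_, ?_, ?_⟩
    · rw [hDeq, dot3_comb, hlB, hlC]; ring
    · rw [hEeq, dot3_comb, hlC, hlA]; ring
    · rw [hFeq, dot3_comb, hlA, hlB]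
      linear_combination -hT
end

section
/- Let ABC be a projective triangle with polar triangle A'B'C' with respect to a conic Φ. Define the double triangle with sides a'' = A₀A, b'' = B₀B, c'' = C₀C, where A₀ = a·a', B₀ = b·b', C₀ = c·c'. Then the pseudomedians AA'', BB'', CC'' (joining each vertex of ABC to the opposite vertex of the double triangle) are concurrent. -/
open Matrix

/-!
Write `p = ⟨B, C⟩`, `q = ⟨C, A⟩`, `r = ⟨A, B⟩` for the values of the symmetric form defining the
polarity. The point of `CA` on the polar of `B` is `B0 ∼ r C - p A`, and likewise
`C0 ∼ p A - q B`, `A0 ∼ q B - r C`. The point `p A - q B - r C` lies on `b'' = B0 B` and on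
`c'' = C0 C`, so it is `A''`, and `AA''` passes through `N = p A + q B + r C`; cyclically, so do
`BB''` and `CC''`. This needs `p, q, r ≠ 0`: if `p = 0`, then `b''` and `c''` both equal `BC`, and
the double triangle degenerates onto that line.
-/

section Collinearity

variable {A B C X Y Z : Fin 3 → ℝ} {p q r : ℝ}

theorem Coll.rotate (h : Coll A B C) : Coll B C A :=
  let ⟨l, hl, hA, hB, hC⟩ := h; ⟨l, hl, hB, hC, hA⟩

theorem Coll.swap (h : Coll A B C) : Coll B A C :=
  let ⟨l, hl, hA, hB, hC⟩ := h; ⟨l, hl, hB, hA, hC⟩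

theorem coll_iff_det : Coll A B C ↔ (of ![A, B, C]).det = 0 := by
  rw [← exists_mulVec_eq_zero_iff]
  refine exists_congr fun l => and_congr_right fun _ => ?_
  simp [funext_iff, Fin.forall_fin_succ, dot3, dotProduct, Fin.sum_univ_three, mul_comm]

theorem coll_iff_not_linearIndependent : Coll A B C ↔ ¬LinearIndependent ℝ ![A, B, C] := by
  rw [coll_iff_det, ← not_ne_iff, ← isUnit_iff_ne_zero, ← isUnit_iff_isUnit_det,
    ← linearIndependent_rows_iff_isUnit]
  rfl

theorem linearIndependent_pair_of_not_coll (h : ¬Coll A B C) : LinearIndependent ℝ ![A, B] := by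
  convert (coll_iff_not_linearIndependent.not_left.1 h).comp _ (Fin.castSucc_injective 2) using 1
  ext i
  fin_cases i <;> rfl

theorem coll_smul_left_iff {k : ℝ} (hk : k ≠ 0) : Coll (k • A) B C ↔ Coll A B C := by
  have : (of ![k • A, B, C]).det = k * (of ![A, B, C]).det := by
    simp only [det_fin_three, of_apply, cons_val, Pi.smul_apply, smul_eq_mul]
    ring
  rw [coll_iff_det, coll_iff_det, this, mul_eq_zero, or_iff_right hk]

theorem exists_eq_add_of_coll (hYZ : LinearIndependent ℝ ![Y, Z]) (h : Coll Y Z X) :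
    ∃ s t : ℝ, X = s • Y + t • Z := by
  have hX : X ∈ Submodule.span ℝ {Y, Z} := by
    by_contra hX
    refine coll_iff_not_linearIndependent.1 h.rotate.rotate (linearIndependent_finCons.2 ⟨hYZ, ?_⟩)
    rwa [range_cons, range_cons, range_empty, Set.union_empty, ← Set.insert_eq]
  obtain ⟨s, t, h⟩ := Submodule.mem_span_pair.1 hX
  exact ⟨s, t, h.symm⟩

theorem coll_of_coll_of_coll_of_coll (hYZ : LinearIndependent ℝ ![Y, Z]) (hA : Coll Y Z A)
    (hB : Coll Y Z B) (hC : Coll Y Z C) : Coll A B C := by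
  obtain ⟨s₁, t₁, rfl⟩ := exists_eq_add_of_coll hYZ hA
  obtain ⟨s₂, t₂, rfl⟩ := exists_eq_add_of_coll hYZ hB
  obtain ⟨s₃, t₃, rfl⟩ := exists_eq_add_of_coll hYZ hC
  rw [coll_iff_det, det_fin_three]
  simp only [of_apply, cons_val, Pi.add_apply, Pi.smul_apply, smul_eq_mul]
  ring

theorem dot3_eq_dotProduct (u v : Fin 3 → ℝ) : dot3 u v = u ⬝ᵥ v := by
  simp [dot3, dotProduct, Fin.sum_univ_three]

theorem dot3_mulVec_comm {M : Matrix (Fin 3) (Fin 3) ℝ} (hM : M.IsSymm) (u v : Fin 3 → ℝ) :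
    dot3 u (M *ᵥ v) = dot3 v (M *ᵥ u) := by
  rw [dot3_eq_dotProduct, dot3_eq_dotProduct, dotProduct_mulVec, ← mulVec_transpose, hM.eq,
    dotProduct_comm]

theorem exists_eq_smul_of_coll_of_dot3_eq_zero {l : Fin 3 → ℝ}
    (hYZ : LinearIndependent ℝ ![Y, Z]) (hX : Coll Y Z X) (hXl : dot3 X l = 0)
    (hl : ¬(dot3 Y l = 0 ∧ dot3 Z l = 0)) : ∃ k : ℝ, X = k • (dot3 Z l • Y - dot3 Y l • Z) := by
  obtain ⟨s, t, rfl⟩ := exists_eq_add_of_coll hYZ hX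
  have hst : s * dot3 Y l + t * dot3 Z l = 0 := by
    simpa [dot3_eq_dotProduct, add_dotProduct] using hXl
  by_cases hZl : dot3 Z l = 0
  · have hYl : dot3 Y l ≠ 0 := fun h => hl ⟨h, hZl⟩
    have hs : s = 0 := by simpa [hZl, hYl] using hst
    refine ⟨-t / dot3 Y l, ?_⟩
    ext i
    simp only [hs, hZl, Pi.add_apply, Pi.smul_apply, Pi.sub_apply, smul_eq_mul]
    field_simp
    ring
  · refine ⟨s / dot3 Z l, ?_⟩
    ext i
    simp only [Pi.add_apply, Pi.smul_apply, Pi.sub_apply, smul_eq_mul]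
    field_simp
    linear_combination Z i * hst

theorem coll_add_smul_of_coll_sub_smul (hp : p ≠ 0) (hB : Coll (r • C - p • A) B X)
    (hC : Coll (p • A - q • B) C X) : Coll A X (p • A + q • B + r • C) := by
  rw [coll_iff_det, det_fin_three] at *
  simp only [of_apply, cons_val, Pi.add_apply, Pi.sub_apply, Pi.smul_apply, smul_eq_mul] at *
  apply mul_left_cancel₀ hp
  linear_combination q * hB - r * hC

theorem ne_zero_of_not_coll_of_coll_sub_smul (hBC : LinearIndependent ℝ ![B, C])
    (hB₀ : r • C - p • A ≠ 0) (hC₀ : p • A - q • B ≠ 0) (hX : Coll (r • C - p • A) B X)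
    (hY : Coll (p • A - q • B) C Y) (hZ : Coll (r • C - p • A) B Z) (hXYZ : ¬Coll X Y Z) :
    p ≠ 0 := by
  rintro rfl
  simp only [zero_smul, sub_zero, zero_sub, ← neg_smul] at *
  rw [coll_smul_left_iff (left_ne_zero_of_smul hB₀)] at hX hZ
  rw [coll_smul_left_iff (left_ne_zero_of_smul hC₀)] at hY
  exact hXYZ (coll_of_coll_of_coll_of_coll hBC hX.swap hY hZ.swap)

end Collinearity

theorem pseudomedians_concurrent_general (M : Matrix (Fin 3) (Fin 3) ℝ)
    (hsymm : M.IsSymm)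
    (A B C A0 B0 C0 A'' B'' C'' : Fin 3 → ℝ)
    (hABC : ¬Coll A B C)
    (hpolA : ¬(dot3 B (M.mulVec A) = 0 ∧ dot3 C (M.mulVec A) = 0))
    (hpolB : ¬(dot3 C (M.mulVec B) = 0 ∧ dot3 A (M.mulVec B) = 0))
    (hpolC : ¬(dot3 A (M.mulVec C) = 0 ∧ dot3 B (M.mulVec C) = 0))
    (hA0 : A0 ≠ 0) (hA0a : Coll B C A0) (hA0b : dot3 A0 (M.mulVec A) = 0)
    (hB0 : B0 ≠ 0) (hB0a : Coll C A B0) (hB0b : dot3 B0 (M.mulVec B) = 0)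
    (hC0 : C0 ≠ 0) (hC0a : Coll A B C0) (hC0b : dot3 C0 (M.mulVec C) = 0)
    (hA''1 : Coll B0 B A'') (hA''2 : Coll C0 C A'')
    (hB''1 : Coll C0 C B'') (hB''2 : Coll A0 A B'')
    (hC''1 : Coll A0 A C'') (hC''2 : Coll B0 B C'')
    (hT'' : ¬Coll A'' B'' C'') :
    ∃ N : Fin 3 → ℝ, N ≠ 0 ∧ Coll A A'' N ∧ Coll B B'' N ∧ Coll C C'' N := by
  have hBC := linearIndependent_pair_of_not_coll (fun h => hABC h.rotate.rotate)
  have hCA := linearIndependent_pair_of_not_coll (fun h => hABC h.rotate)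
  have hAB := linearIndependent_pair_of_not_coll hABC
  obtain ⟨a, rfl⟩ := exists_eq_smul_of_coll_of_dot3_eq_zero hBC hA0a hA0b hpolA
  obtain ⟨b, rfl⟩ := exists_eq_smul_of_coll_of_dot3_eq_zero hCA hB0a hB0b hpolB
  obtain ⟨c, rfl⟩ := exists_eq_smul_of_coll_of_dot3_eq_zero hAB hC0a hC0b hpolC
  rw [coll_smul_left_iff (left_ne_zero_of_smul hA0)] at hB''2 hC''1
  rw [coll_smul_left_iff (left_ne_zero_of_smul hB0)] at hA''1 hC''2
  rw [coll_smul_left_iff (left_ne_zero_of_smul hC0)] at hA''2 hB''1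
  rw [dot3_mulVec_comm hsymm B A, dot3_mulVec_comm hsymm C B, dot3_mulVec_comm hsymm A C] at *
  set p := dot3 B (M *ᵥ C)
  set q := dot3 C (M *ᵥ A)
  set r := dot3 A (M *ᵥ B)
  have hp : p ≠ 0 := ne_zero_of_not_coll_of_coll_sub_smul hBC (right_ne_zero_of_smul hB0)
    (right_ne_zero_of_smul hC0) hA''1 hB''1 hC''2 hT''
  have hq : q ≠ 0 := ne_zero_of_not_coll_of_coll_sub_smul hCA (right_ne_zero_of_smul hC0)
    (right_ne_zero_of_smul hA0) hB''1 hC''1 hA''2 (fun h => hT'' h.rotate.rotate)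
  have hr : r ≠ 0 := ne_zero_of_not_coll_of_coll_sub_smul hAB (right_ne_zero_of_smul hA0)
    (right_ne_zero_of_smul hB0) hC''1 hA''1 hB''2 (fun h => hT'' h.rotate)
  refine ⟨p • A + q • B + r • C, fun hN => hp ?_, coll_add_smul_of_coll_sub_smul hp hA''1 hA''2,
    ?_, ?_⟩
  · refine Fintype.linearIndependent_iff.1 (coll_iff_not_linearIndependent.not_left.1 hABC)
      ![p, q, r] ?_ 0
    simpa [Fin.sum_univ_three] using hN
  · convert coll_add_smul_of_coll_sub_smul hq hB''1 hB''2 using 1; abel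
  · convert coll_add_smul_of_coll_sub_smul hr hC''1 hC''2 using 1; abel

/-- Concurrence of the pseudomedians: let `ABC` be a triangle in general position with
respect to a nondegenerate conic, `A0 = BC ∩ ρ(A)`, `B0 = CA ∩ ρ(B)`, `C0 = AB ∩ ρ(C)`,
and let the double triangle have sides `a'' = A0A`, `b'' = B0B`, `c'' = C0C` with
vertices `A'' = b'' ∩ c''`, `B'' = c'' ∩ a''`, `C'' = a'' ∩ b''`.  Then the pseudomedians
`AA''`, `BB''`, `CC''` are concurrent. -/
theorem pseudomedians_concurrent (M : Matrix (Fin 3) (Fin 3) ℝ)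
    (hsymm : M.IsSymm) (hdet : M.det ≠ 0)
    (A B C A0 B0 C0 A'' B'' C'' : Fin 3 → ℝ)
    (hABC : ¬Coll A B C)
    (hAc : dot3 A (M.mulVec A) ≠ 0) (hBc : dot3 B (M.mulVec B) ≠ 0)
    (hCc : dot3 C (M.mulVec C) ≠ 0)
    (hpolA : ¬(dot3 B (M.mulVec A) = 0 ∧ dot3 C (M.mulVec A) = 0))
    (hpolB : ¬(dot3 C (M.mulVec B) = 0 ∧ dot3 A (M.mulVec B) = 0))
    (hpolC : ¬(dot3 A (M.mulVec C) = 0 ∧ dot3 B (M.mulVec C) = 0))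
    (hA0 : A0 ≠ 0) (hA0a : Coll B C A0) (hA0b : dot3 A0 (M.mulVec A) = 0)
    (hB0 : B0 ≠ 0) (hB0a : Coll C A B0) (hB0b : dot3 B0 (M.mulVec B) = 0)
    (hC0 : C0 ≠ 0) (hC0a : Coll A B C0) (hC0b : dot3 C0 (M.mulVec C) = 0)
    (hA'' : A'' ≠ 0) (hA''1 : Coll B0 B A'') (hA''2 : Coll C0 C A'')
    (hB'' : B'' ≠ 0) (hB''1 : Coll C0 C B'') (hB''2 : Coll A0 A B'')
    (hC'' : C'' ≠ 0) (hC''1 : Coll A0 A C'') (hC''2 : Coll B0 B C'')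
    (hT'' : ¬Coll A'' B'' C'')
    (hAA'' : ∀ t : ℝ, A'' ≠ t • A) (hBB'' : ∀ t : ℝ, B'' ≠ t • B)
    (hCC'' : ∀ t : ℝ, C'' ≠ t • C) :
    ∃ N : Fin 3 → ℝ, N ≠ 0 ∧ Coll A A'' N ∧ Coll B B'' N ∧ Coll C C'' N :=
  pseudomedians_concurrent_general M hsymm A B C A0 B0 C0 A'' B'' C'' hABC hpolA hpolB hpolC hA0
    hA0a hA0b hB0 hB0a hB0b hC0 hC0a hC0b hA''1 hA''2 hB''1 hB''2 hC''1 hC''2 hT''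
end

section
/- With the double triangle A''B''C'' of a projective triangle ABC with respect to conic Φ defined as above, the points A and A₀ are the two midpoints of segment B''C'' with respect to Φ (and similarly B, B₀ are midpoints of C''A'' and C, C₀ of A''B''). -/
open Matrix

private lemma dl2 (x y : ℝ) (u v w : Fin 3 → ℝ) :
    dot3 (x • u + y • v) w = x * dot3 u w + y * dot3 v w := by
  simp [dot3]; ring

private lemma dl3 (x y z : ℝ) (u v w r : Fin 3 → ℝ) :
    dot3 (x • u + y • v + z • w) r = x * dot3 u r + y * dot3 v r + z * dot3 w r := by
  simp [dot3]; ring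

private lemma dr2 (x y : ℝ) (l u v : Fin 3 → ℝ) :
    dot3 l (x • u + y • v) = x * dot3 l u + y * dot3 l v := by
  simp [dot3]; ring

private lemma dr3 (x y z : ℝ) (l u v w : Fin 3 → ℝ) :
    dot3 l (x • u + y • v + z • w) = x * dot3 l u + y * dot3 l v + z * dot3 l w := by
  simp [dot3]; ring

private lemma dsl (s : ℝ) (u v : Fin 3 → ℝ) : dot3 (s • u) v = s * dot3 u v := by
  simp [dot3]; ring

private lemma dsr (s : ℝ) (l u : Fin 3 → ℝ) : dot3 l (s • u) = s * dot3 l u := by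
  simp [dot3]; ring

private lemma dot3_zero_left (v : Fin 3 → ℝ) : dot3 0 v = 0 := by simp [dot3]

private def cross3 (u v : Fin 3 → ℝ) : Fin 3 → ℝ :=
  ![u 1 * v 2 - u 2 * v 1, u 2 * v 0 - u 0 * v 2, u 0 * v 1 - u 1 * v 0]

private lemma cramer3 (A B C u : Fin 3 → ℝ) :
    (dot3 (cross3 B C) A) • u =
      (dot3 (cross3 B C) u) • A + (dot3 (cross3 C A) u) • B + (dot3 (cross3 A B) u) • C := by
  funext i
  fin_cases i <;> (simp [cross3, dot3]; ring)

private lemma qsymm (M : Matrix (Fin 3) (Fin 3) ℝ) (hs : M.IsSymm) (u v : Fin 3 → ℝ) :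
    dot3 u (M.mulVec v) = dot3 v (M.mulVec u) := by
  have h01 : M 1 0 = M 0 1 := congrFun (congrFun hs 0) 1
  have h02 : M 2 0 = M 0 2 := congrFun (congrFun hs 0) 2
  have h12 : M 2 1 = M 1 2 := congrFun (congrFun hs 1) 2
  simp [dot3, Matrix.mulVec, dotProduct, Fin.sum_univ_three]
  linear_combination (u 1 * v 0 - u 0 * v 1) * h01 + (u 2 * v 0 - u 0 * v 2) * h02 +
    (u 2 * v 1 - u 1 * v 2) * h12

private lemma notColl_ne {A B C : Fin 3 → ℝ} (h : ¬ Coll A B C) :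
    dot3 (cross3 B C) A ≠ 0 := by
  intro h0
  apply h
  have hdet : (Matrix.of ![A, B, C]).det = 0 := by
    rw [Matrix.det_fin_three]
    simp [cross3, dot3] at h0 ⊢
    linear_combination h0
  obtain ⟨l, hl, hml⟩ := (Matrix.exists_mulVec_eq_zero_iff).mpr hdet
  have k : ∀ i, ((Matrix.of ![A, B, C]) *ᵥ l) i = 0 := fun i => congrFun hml i
  refine ⟨l, hl, ?_, ?_, ?_⟩
  · have := k 0
    simp [Matrix.mulVec, dotProduct, Fin.sum_univ_three] at this
    simp [dot3]; linarith
  · have := k 1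
    simp [Matrix.mulVec, dotProduct, Fin.sum_univ_three] at this
    simp [dot3]; linarith
  · have := k 2
    simp [Matrix.mulVec, dotProduct, Fin.sum_univ_three] at this
    simp [dot3]; linarith

private lemma hprop (s t b g : ℝ) (h : s * g + t * b = 0) (hbg : ¬(b = 0 ∧ g = 0))
    (hst : ¬(s = 0 ∧ t = 0)) : ∃ l : ℝ, l ≠ 0 ∧ s = l * b ∧ t = -(l * g) := by
  by_cases hb : b = 0
  · have hg : g ≠ 0 := fun hg => hbg ⟨hb, hg⟩
    have hs : s = 0 := by
      have : s * g = 0 := by rw [hb] at h; linarith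
      exact (mul_eq_zero.mp this).resolve_right hg
    have ht : t ≠ 0 := fun ht => hst ⟨hs, ht⟩
    refine ⟨-(t / g), by simpa using div_ne_zero ht hg, by rw [hb, hs]; ring, by field_simp; try ring⟩
  · have hs : s ≠ 0 := by
      intro hs
      have : t * b = 0 := by rw [hs] at h; linarith
      exact hst ⟨hs, (mul_eq_zero.mp this).resolve_right hb⟩
    refine ⟨s / b, div_ne_zero hs hb, by field_simp, ?_⟩
    field_simp
    linarith

private lemma hsolve (x y p q u v : ℝ) (h1 : p * x = q * y) (h2 : ¬(x = 0 ∧ y = 0))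
    (h3 : u * x + v * y = 0) : u * q + v * p = 0 := by
  by_cases hx : x = 0
  · have hy : y ≠ 0 := fun hy => h2 ⟨hx, hy⟩
    have hq : q = 0 := by
      have : q * y = 0 := by rw [hx] at h1; linarith
      exact (mul_eq_zero.mp this).resolve_right hy
    have hv : v = 0 := by
      have : v * y = 0 := by rw [hx] at h3; linarith
      exact (mul_eq_zero.mp this).resolve_right hy
    rw [hq, hv]; ring
  · have h4 : (u * q + v * p) * x = 0 := by linear_combination q * h3 + v * h1
    exact (mul_eq_zero.mp h4).resolve_right hx

private lemma mulne (a b x : ℝ) (ha : a ≠ 0) (hb : b ≠ 0) (h : a * b * x = 0) : x = 0 := by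
  rcases mul_eq_zero.mp h with h' | h'
  · exact absurd h' (mul_ne_zero ha hb)
  · exact h'

private lemma coll_rot {a b c : Fin 3 → ℝ} (h : Coll a b c) : Coll b c a := by
  obtain ⟨l, hl, h1, h2, h3⟩ := h; exact ⟨l, hl, h2, h3, h1⟩

private lemma coord_vanish {A B C : Fin 3 → ℝ} (hABC : ¬Coll A B C)
    (P Q u : Fin 3 → ℝ) (h : Coll P Q u)
    (hPQ : ∀ l : Fin 3 → ℝ, dot3 l P = 0 → dot3 l Q = 0 → dot3 l B = 0 ∧ dot3 l C = 0) :
    dot3 (cross3 B C) u = 0 := by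
  obtain ⟨l, hl, hP, hQ, hu⟩ := h
  obtain ⟨hB, hC⟩ := hPQ l hP hQ
  have hA : dot3 l A ≠ 0 := fun hA => hABC ⟨l, hl, hA, hB, hC⟩
  have h2 := congrArg (dot3 l) (cramer3 A B C u)
  rw [dsr, dr3, hu, hB, hC] at h2
  have h3 : dot3 (cross3 B C) u * dot3 l A = 0 := by linarith
  exact (mul_eq_zero.mp h3).resolve_right hA

private lemma aux (M : Matrix (Fin 3) (Fin 3) ℝ) (hsymm : M.IsSymm)
    (A B C A0 B0 C0 A'' B'' C'' : Fin 3 → ℝ)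
    (hABC : ¬Coll A B C)
    (hpolA : ¬(dot3 B (M.mulVec A) = 0 ∧ dot3 C (M.mulVec A) = 0))
    (hpolB : ¬(dot3 C (M.mulVec B) = 0 ∧ dot3 A (M.mulVec B) = 0))
    (hpolC : ¬(dot3 A (M.mulVec C) = 0 ∧ dot3 B (M.mulVec C) = 0))
    (hA0 : A0 ≠ 0) (hA0a : Coll B C A0) (hA0b : dot3 A0 (M.mulVec A) = 0)
    (hB0 : B0 ≠ 0) (hB0a : Coll C A B0) (hB0b : dot3 B0 (M.mulVec B) = 0)
    (hC0 : C0 ≠ 0) (hC0a : Coll A B C0) (hC0b : dot3 C0 (M.mulVec C) = 0)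
    (hA''1 : Coll B0 B A'') (hA''2 : Coll C0 C A'')
    (hB'' : B'' ≠ 0) (hB''1 : Coll C0 C B'') (hB''2 : Coll A0 A B'')
    (hC'' : C'' ≠ 0) (hC''1 : Coll A0 A C'') (hC''2 : Coll B0 B C'')
    (hT'' : ¬Coll A'' B'' C'') :
    Coll B'' C'' A ∧ Coll B'' C'' A0 ∧ dot3 A (M.mulVec A0) = 0 ∧
      CRv B'' C'' A A0 (-1) := by
  have hBCA : ¬Coll B C A := fun h => hABC (coll_rot (coll_rot h))
  have hCAB : ¬Coll C A B := fun h => hABC (coll_rot h)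
  set lA := cross3 B C with hlA
  set lB := cross3 C A with hlB
  set lC := cross3 A B with hlC
  set D := dot3 lA A with hD
  have hDne : D ≠ 0 := by rw [hD, hlA]; exact notColl_ne hABC
  have eAB : dot3 lA B = 0 := by rw [hlA]; simp [cross3, dot3]; try ring
  have eAC : dot3 lA C = 0 := by rw [hlA]; simp [cross3, dot3]; try ring
  have eBA : dot3 lB A = 0 := by rw [hlB]; simp [cross3, dot3]; try ring
  have eBC : dot3 lB C = 0 := by rw [hlB]; simp [cross3, dot3]; try ring
  have eCA : dot3 lC A = 0 := by rw [hlC]; simp [cross3, dot3]; try ring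
  have eCB : dot3 lC B = 0 := by rw [hlC]; simp [cross3, dot3]; try ring
  have eBB : dot3 lB B = D := by rw [hlB, hD, hlA]; simp [cross3, dot3]; try ring
  have eCC : dot3 lC C = D := by rw [hlC, hD, hlA]; simp [cross3, dot3]; try ring
  set al := dot3 B (M.mulVec C) with hal
  set be := dot3 C (M.mulVec A) with hbe
  set ga := dot3 A (M.mulVec B) with hga
  have sBA : dot3 B (M.mulVec A) = ga := by rw [hga]; exact qsymm M hsymm B A
  have sCB : dot3 C (M.mulVec B) = al := by rw [hal]; exact qsymm M hsymm C B
  have sAC : dot3 A (M.mulVec C) = be := by rw [hbe]; exact qsymm M hsymm A C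
  have cram : ∀ u : Fin 3 → ℝ,
      D • u = (dot3 lA u) • A + (dot3 lB u) • B + (dot3 lC u) • C := by
    intro u; rw [hD, hlA, hlB, hlC]; exact cramer3 A B C u
  -- coordinates of A0
  have a0c1 : dot3 lA A0 = 0 := by
    rw [hlA]; exact coord_vanish hABC B C A0 hA0a (fun l h1 h2 => ⟨h1, h2⟩)
  have hconjA0 : dot3 lB A0 * ga + dot3 lC A0 * be = 0 := by
    have e1 := congrArg (fun t => dot3 t (M.mulVec A)) (cram A0)
    rw [dsl, dl3, hA0b, a0c1, sBA] at e1
    rw [← hbe] at e1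
    linarith
  have a0ne : ¬(dot3 lB A0 = 0 ∧ dot3 lC A0 = 0) := by
    rintro ⟨h1, h2⟩
    apply hA0
    have h3 := cram A0
    rw [a0c1, h1, h2] at h3
    simp only [zero_smul, add_zero, zero_add] at h3
    exact (smul_eq_zero.mp h3).resolve_left hDne
  have hbg : ¬(be = 0 ∧ ga = 0) := by
    rintro ⟨h1, h2⟩
    exact hpolA ⟨by rw [sBA]; exact h2, h1⟩
  obtain ⟨a0, ha0, ha0B, ha0C⟩ := hprop (dot3 lB A0) (dot3 lC A0) be ga hconjA0 hbg a0ne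
  have hDA0 : D • A0 = (a0 * be) • B + (-(a0 * ga)) • C := by
    have h3 := cram A0
    rw [a0c1, ha0B, ha0C] at h3
    simpa using h3
  -- coordinates of B0
  have b0c2 : dot3 lB B0 = 0 := by
    rw [hlB]; exact coord_vanish hBCA C A B0 hB0a (fun l h1 h2 => ⟨h1, h2⟩)
  have hconjB0 : dot3 lA B0 * ga + dot3 lC B0 * al = 0 := by
    have e1 := congrArg (fun t => dot3 t (M.mulVec B)) (cram B0)
    rw [dsl, dl3, hB0b, b0c2, sCB] at e1
    rw [← hga] at e1
    linarith
  have b0ne : ¬(dot3 lA B0 = 0 ∧ dot3 lC B0 = 0) := by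
    rintro ⟨h1, h2⟩
    apply hB0
    have h3 := cram B0
    rw [b0c2, h1, h2] at h3
    simp only [zero_smul, add_zero, zero_add] at h3
    exact (smul_eq_zero.mp h3).resolve_left hDne
  have hag : ¬(al = 0 ∧ ga = 0) := by
    rintro ⟨h1, h2⟩
    exact hpolB ⟨by rw [sCB]; exact h1, h2⟩
  obtain ⟨b0, hb0, hb0A, hb0C⟩ := hprop (dot3 lA B0) (dot3 lC B0) al ga hconjB0 hag b0ne
  have hDB0 : D • B0 = (b0 * al) • A + (-(b0 * ga)) • C := by
    have h3 := cram B0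
    rw [b0c2, hb0A, hb0C] at h3
    simpa using h3
  -- coordinates of C0
  have c0c3 : dot3 lC C0 = 0 := by
    rw [hlC]; exact coord_vanish hCAB A B C0 hC0a (fun l h1 h2 => ⟨h1, h2⟩)
  have hconjC0 : dot3 lA C0 * be + dot3 lB C0 * al = 0 := by
    have e1 := congrArg (fun t => dot3 t (M.mulVec C)) (cram C0)
    rw [dsl, dl3, hC0b, c0c3, sAC] at e1
    rw [← hal] at e1
    linarith
  have c0ne : ¬(dot3 lA C0 = 0 ∧ dot3 lB C0 = 0) := by
    rintro ⟨h1, h2⟩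
    apply hC0
    have h3 := cram C0
    rw [c0c3, h1, h2] at h3
    simp only [zero_smul, add_zero, zero_add] at h3
    exact (smul_eq_zero.mp h3).resolve_left hDne
  have hab : ¬(al = 0 ∧ be = 0) := by
    rintro ⟨h1, h2⟩
    exact hpolC ⟨by rw [sAC]; exact h2, h1⟩
  obtain ⟨c0, hc0, hc0A, hc0B⟩ := hprop (dot3 lA C0) (dot3 lB C0) al be hconjC0 hab c0ne
  have hDC0 : D • C0 = (c0 * al) • A + (-(c0 * be)) • B := by
    have h3 := cram C0
    rw [c0c3, hc0A, hc0B] at h3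
    simpa using h3
  -- nonvanishing of the Gram entries ga, be, al
  have hga0 : ga ≠ 0 := by
    intro h0
    have hbe' : be ≠ 0 := fun h => hbg ⟨h, h0⟩
    have hal' : al ≠ 0 := fun h => hag ⟨h, h0⟩
    have kA0 : ∀ l : Fin 3 → ℝ, dot3 l A0 = 0 → dot3 l B = 0 := by
      intro l hl0
      have e1 := congrArg (dot3 l) hDA0
      rw [dsr, dr2, hl0, h0] at e1
      have e2 : a0 * be * dot3 l B = 0 := by linarith
      exact mulne a0 be _ ha0 hbe' e2
    have kB0 : ∀ l : Fin 3 → ℝ, dot3 l B0 = 0 → dot3 l A = 0 := by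
      intro l hl0
      have e1 := congrArg (dot3 l) hDB0
      rw [dsr, dr2, hl0, h0] at e1
      have e2 : b0 * al * dot3 l A = 0 := by linarith
      exact mulne b0 al _ hb0 hal' e2
    have z1 : dot3 lC A'' = 0 := by
      rw [hlC]; exact coord_vanish hCAB B0 B A'' hA''1 (fun l h1 h2 => ⟨kB0 l h1, h2⟩)
    have z2 : dot3 lC B'' = 0 := by
      rw [hlC]; exact coord_vanish hCAB A0 A B'' hB''2 (fun l h1 h2 => ⟨h2, kA0 l h1⟩)
    have z3 : dot3 lC C'' = 0 := by
      rw [hlC]; exact coord_vanish hCAB A0 A C'' hC''1 (fun l h1 h2 => ⟨h2, kA0 l h1⟩)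
    have hlCne : lC ≠ 0 := fun h => hDne (by rw [← eCC, h, dot3_zero_left])
    exact hT'' ⟨lC, hlCne, z1, z2, z3⟩
  have hbe0 : be ≠ 0 := by
    intro h0
    have hga' : ga ≠ 0 := fun h => hbg ⟨h0, h⟩
    have hal' : al ≠ 0 := fun h => hab ⟨h, h0⟩
    have kA0 : ∀ l : Fin 3 → ℝ, dot3 l A0 = 0 → dot3 l C = 0 := by
      intro l hl0
      have e1 := congrArg (dot3 l) hDA0
      rw [dsr, dr2, hl0, h0] at e1
      have e2 : a0 * ga * dot3 l C = 0 := by linarith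
      exact mulne a0 ga _ ha0 hga' e2
    have kC0 : ∀ l : Fin 3 → ℝ, dot3 l C0 = 0 → dot3 l A = 0 := by
      intro l hl0
      have e1 := congrArg (dot3 l) hDC0
      rw [dsr, dr2, hl0, h0] at e1
      have e2 : c0 * al * dot3 l A = 0 := by linarith
      exact mulne c0 al _ hc0 hal' e2
    have z1 : dot3 lB A'' = 0 := by
      rw [hlB]; exact coord_vanish hBCA C0 C A'' hA''2 (fun l h1 h2 => ⟨h2, kC0 l h1⟩)
    have z2 : dot3 lB B'' = 0 := by
      rw [hlB]; exact coord_vanish hBCA A0 A B'' hB''2 (fun l h1 h2 => ⟨kA0 l h1, h2⟩)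
    have z3 : dot3 lB C'' = 0 := by
      rw [hlB]; exact coord_vanish hBCA A0 A C'' hC''1 (fun l h1 h2 => ⟨kA0 l h1, h2⟩)
    have hlBne : lB ≠ 0 := fun h => hDne (by rw [← eBB, h, dot3_zero_left])
    exact hT'' ⟨lB, hlBne, z1, z2, z3⟩
  have hal0 : al ≠ 0 := by
    intro h0
    have hga' : ga ≠ 0 := fun h => hag ⟨h0, h⟩
    have hbe' : be ≠ 0 := fun h => hab ⟨h0, h⟩
    have kB0 : ∀ l : Fin 3 → ℝ, dot3 l B0 = 0 → dot3 l C = 0 := by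
      intro l hl0
      have e1 := congrArg (dot3 l) hDB0
      rw [dsr, dr2, hl0, h0] at e1
      have e2 : b0 * ga * dot3 l C = 0 := by linarith
      exact mulne b0 ga _ hb0 hga' e2
    have kC0 : ∀ l : Fin 3 → ℝ, dot3 l C0 = 0 → dot3 l B = 0 := by
      intro l hl0
      have e1 := congrArg (dot3 l) hDC0
      rw [dsr, dr2, hl0, h0] at e1
      have e2 : c0 * be * dot3 l B = 0 := by linarith
      exact mulne c0 be _ hc0 hbe' e2
    have z1 : dot3 lA A'' = 0 := by
      rw [hlA]; exact coord_vanish hABC B0 B A'' hA''1 (fun l h1 h2 => ⟨h2, kB0 l h1⟩)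
    have z2 : dot3 lA B'' = 0 := by
      rw [hlA]; exact coord_vanish hABC C0 C B'' hB''1 (fun l h1 h2 => ⟨kC0 l h1, h2⟩)
    have z3 : dot3 lA C'' = 0 := by
      rw [hlA]; exact coord_vanish hABC B0 B C'' hC''2 (fun l h1 h2 => ⟨h2, kB0 l h1⟩)
    have hlAne : lA ≠ 0 := fun h => hDne (by rw [hD, h, dot3_zero_left])
    exact hT'' ⟨lA, hlAne, z1, z2, z3⟩
  -- coordinates of B''
  have relB''a : dot3 lB B'' * ga + dot3 lC B'' * be = 0 := by
    obtain ⟨l, hl, h1, h2, h3⟩ := hB''2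
    have hr : be * dot3 l B = ga * dot3 l C := by
      have e1 := congrArg (dot3 l) hDA0
      rw [dsr, dr2, h1] at e1
      have e2 : a0 * (be * dot3 l B - ga * dot3 l C) = 0 := by linarith
      have e3 := (mul_eq_zero.mp e2).resolve_left ha0
      linarith
    have hcomb : dot3 lB B'' * dot3 l B + dot3 lC B'' * dot3 l C = 0 := by
      have e1 := congrArg (dot3 l) (cram B'')
      rw [dsr, dr3, h3, h2] at e1
      linarith
    have hne2 : ¬(dot3 l B = 0 ∧ dot3 l C = 0) := by
      rintro ⟨hb, hc⟩; exact hABC ⟨l, hl, h2, hb, hc⟩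
    exact hsolve (dot3 l B) (dot3 l C) be ga _ _ hr hne2 hcomb
  have relB''b : dot3 lA B'' * be + dot3 lB B'' * al = 0 := by
    obtain ⟨l, hl, h1, h2, h3⟩ := hB''1
    have hr : al * dot3 l A = be * dot3 l B := by
      have e1 := congrArg (dot3 l) hDC0
      rw [dsr, dr2, h1] at e1
      have e2 : c0 * (al * dot3 l A - be * dot3 l B) = 0 := by linarith
      have e3 := (mul_eq_zero.mp e2).resolve_left hc0
      linarith
    have hcomb : dot3 lA B'' * dot3 l A + dot3 lB B'' * dot3 l B = 0 := by
      have e1 := congrArg (dot3 l) (cram B'')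
      rw [dsr, dr3, h3, h2] at e1
      linarith
    have hne2 : ¬(dot3 l A = 0 ∧ dot3 l B = 0) := by
      rintro ⟨ha, hb⟩; exact hABC ⟨l, hl, ha, hb, h2⟩
    exact hsolve (dot3 l A) (dot3 l B) al be _ _ hr hne2 hcomb
  set mu := -(dot3 lB B'') / be with hmu
  have hb2 : dot3 lB B'' = -(mu * be) := by rw [hmu]; field_simp
  have hb1 : dot3 lA B'' = mu * al := by
    have h4 : dot3 lA B'' * be = (mu * al) * be := by
      rw [hb2] at relB''b; linear_combination relB''b
    exact mul_right_cancel₀ hbe0 h4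
  have hb3 : dot3 lC B'' = mu * ga := by
    have h4 : dot3 lC B'' * be = (mu * ga) * be := by
      rw [hb2] at relB''a; linear_combination relB''a
    exact mul_right_cancel₀ hbe0 h4
  have hmune : mu ≠ 0 := by
    intro h
    apply hB''
    have h3 := cram B''
    rw [hb1, hb2, hb3, h] at h3
    simp only [zero_mul, neg_zero, zero_smul, add_zero, zero_add] at h3
    exact (smul_eq_zero.mp h3).resolve_left hDne
  have hDB'' : D • B'' = (mu * al) • A + (-(mu * be)) • B + (mu * ga) • C := by
    have h3 := cram B''
    rw [hb1, hb2, hb3] at h3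
    exact h3
  -- coordinates of C''
  have relC''a : dot3 lB C'' * ga + dot3 lC C'' * be = 0 := by
    obtain ⟨l, hl, h1, h2, h3⟩ := hC''1
    have hr : be * dot3 l B = ga * dot3 l C := by
      have e1 := congrArg (dot3 l) hDA0
      rw [dsr, dr2, h1] at e1
      have e2 : a0 * (be * dot3 l B - ga * dot3 l C) = 0 := by linarith
      have e3 := (mul_eq_zero.mp e2).resolve_left ha0
      linarith
    have hcomb : dot3 lB C'' * dot3 l B + dot3 lC C'' * dot3 l C = 0 := by
      have e1 := congrArg (dot3 l) (cram C'')
      rw [dsr, dr3, h3, h2] at e1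
      linarith
    have hne2 : ¬(dot3 l B = 0 ∧ dot3 l C = 0) := by
      rintro ⟨hb, hc⟩; exact hABC ⟨l, hl, h2, hb, hc⟩
    exact hsolve (dot3 l B) (dot3 l C) be ga _ _ hr hne2 hcomb
  have relC''b : dot3 lA C'' * ga + dot3 lC C'' * al = 0 := by
    obtain ⟨l, hl, h1, h2, h3⟩ := hC''2
    have hr : al * dot3 l A = ga * dot3 l C := by
      have e1 := congrArg (dot3 l) hDB0
      rw [dsr, dr2, h1] at e1
      have e2 : b0 * (al * dot3 l A - ga * dot3 l C) = 0 := by linarith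
      have e3 := (mul_eq_zero.mp e2).resolve_left hb0
      linarith
    have hcomb : dot3 lA C'' * dot3 l A + dot3 lC C'' * dot3 l C = 0 := by
      have e1 := congrArg (dot3 l) (cram C'')
      rw [dsr, dr3, h3, h2] at e1
      linarith
    have hne2 : ¬(dot3 l A = 0 ∧ dot3 l C = 0) := by
      rintro ⟨ha, hc⟩; exact hABC ⟨l, hl, ha, h2, hc⟩
    exact hsolve (dot3 l A) (dot3 l C) al ga _ _ hr hne2 hcomb
  set nu := -(dot3 lC C'') / ga with hnu
  have hc3 : dot3 lC C'' = -(nu * ga) := by rw [hnu]; field_simp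
  have hc1 : dot3 lA C'' = nu * al := by
    have h4 : dot3 lA C'' * ga = (nu * al) * ga := by
      rw [hc3] at relC''b; linear_combination relC''b
    exact mul_right_cancel₀ hga0 h4
  have hc2 : dot3 lB C'' = nu * be := by
    have h4 : dot3 lB C'' * ga = (nu * be) * ga := by
      rw [hc3] at relC''a; linear_combination relC''a
    exact mul_right_cancel₀ hga0 h4
  have hnune : nu ≠ 0 := by
    intro h
    apply hC''
    have h3 := cram C''
    rw [hc1, hc2, hc3, h] at h3
    simp only [zero_mul, neg_zero, zero_smul, add_zero, zero_add] at h3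
    exact (smul_eq_zero.mp h3).resolve_left hDne
  have hDC'' : D • C'' = (nu * al) • A + (nu * be) • B + (-(nu * ga)) • C := by
    have h3 := cram C''
    rw [hc1, hc2, hc3] at h3
    exact h3
  -- the line through B'', C'', A, A0
  set L := ga • lB + be • lC with hL
  have hLA : dot3 L A = 0 := by rw [hL, dl2, eBA, eCA]; ring
  have hLB : dot3 L B = ga * D := by rw [hL, dl2, eBB, eCB]; ring
  have hLC : dot3 L C = be * D := by rw [hL, dl2, eBC, eCC]; ring
  have hLne : L ≠ 0 := by
    intro h
    rw [h, dot3_zero_left] at hLB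
    exact hga0 ((mul_eq_zero.mp hLB.symm).resolve_right hDne)
  have hLB'' : dot3 L B'' = 0 := by
    have e1 := congrArg (dot3 L) hDB''
    rw [dsr, dr3, hLA, hLB, hLC] at e1
    have e2 : D * dot3 L B'' = 0 := by linear_combination e1
    exact (mul_eq_zero.mp e2).resolve_left hDne
  have hLC'' : dot3 L C'' = 0 := by
    have e1 := congrArg (dot3 L) hDC''
    rw [dsr, dr3, hLA, hLB, hLC] at e1
    have e2 : D * dot3 L C'' = 0 := by linear_combination e1
    exact (mul_eq_zero.mp e2).resolve_left hDne
  have hLA0 : dot3 L A0 = 0 := by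
    have e1 := congrArg (dot3 L) hDA0
    rw [dsr, dr2, hLB, hLC] at e1
    have e2 : D * dot3 L A0 = 0 := by linear_combination e1
    exact (mul_eq_zero.mp e2).resolve_left hDne
  clear_value lA lB lC D al be ga mu nu L
  obtain ⟨x, hx⟩ : ∃ x : ℝ, 2 * al * mu * x = D := ⟨D / (2 * al * mu), by field_simp; try ring⟩
  obtain ⟨y, hy⟩ : ∃ y : ℝ, 2 * al * nu * y = D := ⟨D / (2 * al * nu), by field_simp; try ring⟩
  obtain ⟨z, hz⟩ : ∃ z : ℝ, 2 * mu * z = -a0 := ⟨-a0 / (2 * mu), by field_simp; try ring⟩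
  obtain ⟨w, hw⟩ : ∃ w : ℝ, 2 * nu * w = a0 := ⟨a0 / (2 * nu), by field_simp; try ring⟩
  have hxne : x ≠ 0 := by rintro rfl; simp only [mul_zero] at hx; exact hDne hx.symm
  have hwne : w ≠ 0 := by rintro rfl; simp only [mul_zero] at hw; exact ha0 hw.symm
  have hxw2 : x * w ≠ 0 := mul_ne_zero hxne hwne
  have h2alD : (2 * al * D : ℝ) ≠ 0 := mul_ne_zero (mul_ne_zero two_ne_zero hal0) hDne
  have h2D : (2 * D : ℝ) ≠ 0 := mul_ne_zero two_ne_zero hDne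
  refine ⟨⟨L, hLne, hLB'', hLC'', hLA⟩, ⟨L, hLne, hLB'', hLC'', hLA0⟩, ?_,
    x, y, z, w, ?_, ?_, hxw2, ?_⟩
  · rw [qsymm M hsymm A A0]; exact hA0b
  · funext i
    have h1 : D * B'' i = mu * al * A i + -(mu * be) * B i + mu * ga * C i := by
      simpa using congrFun hDB'' i
    have h2 : D * C'' i = nu * al * A i + nu * be * B i + -(nu * ga) * C i := by
      simpa using congrFun hDC'' i
    apply mul_left_cancel₀ h2alD
    show 2 * al * D * A i = 2 * al * D * ((x • B'' + y • C'') i)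
    simp only [Pi.add_apply, Pi.smul_apply, smul_eq_mul]
    linear_combination (-(2 * al * x)) * h1 + (-(2 * al * y)) * h2 +
      (-(al * A i - be * B i + ga * C i)) * hx + (-(al * A i + be * B i - ga * C i)) * hy
  · funext i
    have h0 : D * A0 i = a0 * be * B i + -(a0 * ga) * C i := by
      simpa using congrFun hDA0 i
    have h1 : D * B'' i = mu * al * A i + -(mu * be) * B i + mu * ga * C i := by
      simpa using congrFun hDB'' i
    have h2 : D * C'' i = nu * al * A i + nu * be * B i + -(nu * ga) * C i := by
      simpa using congrFun hDC'' i
    apply mul_left_cancel₀ h2D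
    show 2 * D * A0 i = 2 * D * ((z • B'' + w • C'') i)
    simp only [Pi.add_apply, Pi.smul_apply, smul_eq_mul]
    linear_combination 2 * h0 + (-(2 * z)) * h1 + (-(2 * w)) * h2 +
      (-(al * A i - be * B i + ga * C i)) * hz + (-(al * A i + be * B i - ga * C i)) * hw
  · have h5 : 4 * al * mu * nu * (y * z + x * w) = 0 := by
      linear_combination (2 * mu * z) * hy + D * hz + (2 * nu * w) * hx + D * hw
    have h6 : y * z + x * w = 0 :=
      mulne (4 * al * mu) nu _ (mul_ne_zero (mul_ne_zero four_ne_zero hal0) hmune) hnune h5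
    rw [eq_div_iff hxw2]; linarith

/-- `CRv a b c d k`-based statement: with the double triangle `A''B''C''` of `ABC` as
above, the points `A, A0` are the two midpoints of the segment `B''C''` with respect to
the conic (they lie on the line `B''C''`, are conjugate to each other, and harmonically
separate `B'', C''`); similarly `B, B0` for `C''A''` and `C, C0` for `A''B''`. -/
theorem double_triangle_midpoints (M : Matrix (Fin 3) (Fin 3) ℝ)
    (hsymm : M.IsSymm) (hdet : M.det ≠ 0)
    (A B C A0 B0 C0 A'' B'' C'' : Fin 3 → ℝ)
    (hABC : ¬Coll A B C)
    (hAc : dot3 A (M.mulVec A) ≠ 0) (hBc : dot3 B (M.mulVec B) ≠ 0)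
    (hCc : dot3 C (M.mulVec C) ≠ 0)
    (hpolA : ¬(dot3 B (M.mulVec A) = 0 ∧ dot3 C (M.mulVec A) = 0))
    (hpolB : ¬(dot3 C (M.mulVec B) = 0 ∧ dot3 A (M.mulVec B) = 0))
    (hpolC : ¬(dot3 A (M.mulVec C) = 0 ∧ dot3 B (M.mulVec C) = 0))
    (hA0 : A0 ≠ 0) (hA0a : Coll B C A0) (hA0b : dot3 A0 (M.mulVec A) = 0)
    (hB0 : B0 ≠ 0) (hB0a : Coll C A B0) (hB0b : dot3 B0 (M.mulVec B) = 0)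
    (hC0 : C0 ≠ 0) (hC0a : Coll A B C0) (hC0b : dot3 C0 (M.mulVec C) = 0)
    (hA'' : A'' ≠ 0) (hA''1 : Coll B0 B A'') (hA''2 : Coll C0 C A'')
    (hB'' : B'' ≠ 0) (hB''1 : Coll C0 C B'') (hB''2 : Coll A0 A B'')
    (hC'' : C'' ≠ 0) (hC''1 : Coll A0 A C'') (hC''2 : Coll B0 B C'')
    (hT'' : ¬Coll A'' B'' C'')
    :
    (Coll B'' C'' A ∧ Coll B'' C'' A0 ∧ dot3 A (M.mulVec A0) = 0 ∧
      CRv B'' C'' A A0 (-1)) ∧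
    (Coll C'' A'' B ∧ Coll C'' A'' B0 ∧ dot3 B (M.mulVec B0) = 0 ∧
      CRv C'' A'' B B0 (-1)) ∧
    (Coll A'' B'' C ∧ Coll A'' B'' C0 ∧ dot3 C (M.mulVec C0) = 0 ∧
      CRv A'' B'' C C0 (-1)) := by
  have hBCA : ¬Coll B C A := fun h => hABC (coll_rot (coll_rot h))
  have hCAB : ¬Coll C A B := fun h => hABC (coll_rot h)
  have hT2 : ¬Coll B'' C'' A'' := fun h => hT'' (coll_rot (coll_rot h))
  have hT3 : ¬Coll C'' A'' B'' := fun h => hT'' (coll_rot h)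
  exact ⟨aux M hsymm A B C A0 B0 C0 A'' B'' C'' hABC hpolA hpolB hpolC
      hA0 hA0a hA0b hB0 hB0a hB0b hC0 hC0a hC0b hA''1 hA''2 hB'' hB''1 hB''2
      hC'' hC''1 hC''2 hT'',
    aux M hsymm B C A B0 C0 A0 B'' C'' A'' hBCA hpolB hpolC hpolA
      hB0 hB0a hB0b hC0 hC0a hC0b hA0 hA0a hA0b hB''1 hB''2 hC'' hC''1 hC''2
      hA'' hA''1 hA''2 hT2,
    aux M hsymm C A B C0 A0 B0 C'' A'' B'' hCAB hpolC hpolA hpolB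
      hC0 hC0a hC0b hA0 hA0a hA0b hB0 hB0a hB0b hC''1 hC''2 hA'' hA''1 hA''2
      hB'' hB''1 hB''2 hT3⟩
end
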